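/- Let A ∈ 𝓡 be a fixed set and let X^(1), X^(2) be independent random vectors in [0,∞)^d with distributions F_1, F_2 ∈ (𝓓 ∩ 𝓐)_A respectively. Then P[X^(1) + X^(2) ∈ xA] ~ F_1(xA) + F_2(xA) as x → ∞, and the distribution F_1*F_2 of the sum X^(1) + X^(2) belongs to (𝓓 ∩ 𝓐)_A. -/

import Mathlib

open MeasureTheory ProbabilityTheory Filter Topology
open scoped Pointwise

namespace Paper

variable {d : ℕ} {Ω : Type*} [MeasurableSpace Ω]

/-- The family `𝓡` of open, increasing sets with convex complement, bounded away from `0`. -/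
structure IsRSet (d : ℕ) (A : Set (Fin d → ℝ)) : Prop where
  isOpen : IsOpen A
  increasing : ∀ u ∈ A, ∀ v : Fin d → ℝ, (∀ i, 0 ≤ v i) → u + v ∈ A
  convex_compl : Convex ℝ Aᶜ
  zero_notMem_closure : (0 : Fin d → ℝ) ∉ closure A

/-- `Y_A(z) = sup { u > 0 : z ∈ u A }`. -/
noncomputable def suprA (A : Set (Fin d → ℝ)) (z : Fin d → ℝ) : ℝ :=
  sSup {u : ℝ | 0 < u ∧ z ∈ u • A}

/-- `F_A`, the distribution of `Y_A = suprA A ∘ X` under `P`. -/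
noncomputable def FA (P : Measure Ω) (A : Set (Fin d → ℝ)) (X : Ω → Fin d → ℝ) :
    Measure ℝ :=
  P.map (fun ω => suprA A (X ω))

/-- `F (x A) = P[X ∈ x A]` as a real number. -/
noncomputable def vTail (P : Measure Ω) (A : Set (Fin d → ℝ)) (X : Ω → Fin d → ℝ)
    (x : ℝ) : ℝ :=
  (P {ω | X ω ∈ x • A}).toReal

/-- Tail `ν(x, ∞)` of a measure on `ℝ`, as a real number. -/
noncomputable def mTail (ν : Measure ℝ) (x : ℝ) : ℝ := (ν (Set.Ioi x)).toReal

/-- Convolution of two measures on `ℝ`. -/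
noncomputable def mConv (μ ν : Measure ℝ) : Measure ℝ :=
  (μ.prod ν).map (fun p => p.1 + p.2)

/-- `n`-fold convolution power. -/
noncomputable def mConvN (ν : Measure ℝ) : ℕ → Measure ℝ
  | 0 => Measure.dirac 0
  | n + 1 => mConv (mConvN ν n) ν

/-- Long-tailed class `𝓛`. -/
def MemL (ν : Measure ℝ) : Prop :=
  ∀ a : ℝ, 0 < a → Tendsto (fun x => mTail ν (x - a) / mTail ν x) atTop (𝓝 1)

/-- Subexponential class `𝓢`. -/
def MemS (ν : Measure ℝ) : Prop :=
  Tendsto (fun x => mTail (mConv ν ν) x / mTail ν x) atTop (𝓝 2)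

/-- Dominatedly varying class `𝓓`. -/
def MemD (ν : Measure ℝ) : Prop :=
  ∀ y : ℝ, 0 < y → y < 1 → ∃ C : ℝ, ∀ᶠ x in atTop, mTail ν (y * x) / mTail ν x ≤ C

/-- Positively decreasing class `𝓟𝓓`. -/
def MemPD (ν : Measure ℝ) : Prop :=
  ∀ b : ℝ, 1 < b → ∃ c : ℝ, c < 1 ∧ ∀ᶠ x in atTop, mTail ν (b * x) / mTail ν x ≤ c

/-- Consistently varying class `𝓒`. -/
def MemC (ν : Measure ℝ) : Prop :=
  Tendsto (fun b : ℝ => Filter.liminf (fun x => mTail ν (b * x) / mTail ν x) atTop)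
    (nhdsWithin 1 (Set.Ioi 1)) (𝓝 1)

/-- `𝓐 = 𝓢 ∩ 𝓟𝓓`. -/
def MemA (ν : Measure ℝ) : Prop := MemS ν ∧ MemPD ν

/-- `𝓣 = 𝓛 ∩ 𝓟𝓓`. -/
def MemT (ν : Measure ℝ) : Prop := MemL ν ∧ MemPD ν

/-- Regular variation of index `-α` of the tail of `ν`. -/
def MemRV (ν : Measure ℝ) (α : ℝ) : Prop :=
  ∀ t : ℝ, 0 < t → Tendsto (fun x => mTail ν (t * x) / mTail ν x) atTop (𝓝 (t ^ (-α)))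

/-- Weak tail-equivalence `f ≍ g`. -/
def WeakTailEquiv (f g : ℝ → ℝ) : Prop :=
  ∃ c₁ c₂ : ℝ, 0 < c₁ ∧ ∀ᶠ x in atTop, c₁ * g x ≤ f x ∧ f x ≤ c₂ * g x

/-- (Standard) multivariate regular variation `F ∈ MRV(α, V, μ)` of the distribution of `X`. -/
structure IsMRV (P : Measure Ω) (X : Ω → Fin d → ℝ) (α : ℝ) (V : Measure ℝ)
    (μ : Measure (Fin d → ℝ)) : Prop where
  alpha_pos : 0 < α
  V_prob : IsProbabilityMeasure V
  V_rv : MemRV V α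
  mu_ne_zero : ∃ B : Set (Fin d → ℝ), (0 : Fin d → ℝ) ∉ closure B ∧ 0 < μ B
  mu_radon : ∀ B : Set (Fin d → ℝ), (0 : Fin d → ℝ) ∉ closure B → μ B ≠ ⊤
  tendsto : ∀ B : Set (Fin d → ℝ), MeasurableSet B → (0 : Fin d → ℝ) ∉ closure B →
    μ (frontier B) = 0 →
    Tendsto (fun x => vTail P B X x / mTail V x) atTop (𝓝 ((μ B).toReal))

/-- Support of a distribution on `ℝ`. -/
def measSupport (ν : Measure ℝ) : Set ℝ := {t | ∀ U ∈ 𝓝 t, 0 < ν U}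

/-- Assumption `CD_A`: conditional dependence of `(X, Θ)` on `A` with transfer function `h`:
`P[Y_A > x | Θ = t] ~ h(t) P[Y_A > x]` uniformly on the support of the distribution of `Θ`. -/
def CDA (P : Measure Ω) [IsFiniteMeasure P] (A : Set (Fin d → ℝ))
    (X : Ω → Fin d → ℝ) (Θ : Ω → ℝ) (h : ℝ → ℝ) : Prop :=
  ∀ ε : ℝ, 0 < ε → ∀ᶠ x in atTop, ∀ t ∈ measSupport (P.map Θ),
    |((condDistrib (fun ω => suprA A (X ω)) Θ P) t (Set.Ioi x)).toReal /
        (h t * (P {ω | x < suprA A (X ω)}).toReal) - 1| ≤ ε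

/-- Assumption `B_A`: `P[Θ > c x] = o(P[Θ Y_A > x])` for all `c > 0`. -/
def BA (P : Measure Ω) (A : Set (Fin d → ℝ)) (X : Ω → Fin d → ℝ) (Θ : Ω → ℝ) : Prop :=
  ∀ c : ℝ, 0 < c →
    Tendsto (fun x => (P {ω | c * x < Θ ω}).toReal /
      (P {ω | x < Θ ω * suprA A (X ω)}).toReal) atTop (𝓝 0)

/-- Assumption `B_A` in the form `P[Θ > c x] = o(P[Θ X ∈ x A])` for all `c > 0`. -/
def BA' (P : Measure Ω) (A : Set (Fin d → ℝ)) (X : Ω → Fin d → ℝ) (Θ : Ω → ℝ) : Prop :=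
  ∀ c : ℝ, 0 < c →
    Tendsto (fun x => (P {ω | c * x < Θ ω}).toReal /
      (P {ω | Θ ω • X ω ∈ x • A}).toReal) atTop (𝓝 0)

/-!
Because `Aᶜ` is convex, `Y_A = suprA A` is subadditive, and hence also
`Y_A(v) - Y_A(-w) ≤ Y_A(v + w)`. The first inequality puts the tail of `Y_A(X₁ + X₂)` below the
tail of the convolution `F₁A * F₂A`, which for `𝓓 ∩ 𝓛` distributions is `~ F̄₁A + F̄₂A`. The second
puts it above `(1 - ε) (F̄₁A + F̄₂A)(x + K)` up to a product term, once `K` is so large that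
`Y_A(-Xᵢ) ≤ K` with probability `≥ 1 - ε`; by long-tailedness (`𝓢 ⊆ 𝓛` on `[0, ∞)`) this is again
`~ F̄₁A + F̄₂A`. A tail equivalent to `F̄₁A + F̄₂A` inherits `𝓓`, `𝓟𝓓` and `𝓛` from the summands,
and `𝓓 ∩ 𝓛 ⊆ 𝓢`.
-/

open Set

lemma suprA_nonneg (A : Set (Fin d → ℝ)) (z : Fin d → ℝ) : 0 ≤ suprA A z :=
  Real.sSup_nonneg fun _ hu => hu.1.le

namespace IsRSet

variable {A : Set (Fin d → ℝ)}

lemma exists_pos_le_apply (hA : IsRSet d A) : ∃ r > 0, ∀ a ∈ A, ∃ i, r ≤ a i := by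
  have h0 := hA.zero_notMem_closure
  simp only [Metric.mem_closure_iff, not_forall, not_exists, not_and, not_lt] at h0
  obtain ⟨r, hr, hball⟩ := h0
  refine ⟨r, hr, fun a ha => ?_⟩
  by_contra! hlt
  have hmax : a + (fun i => max (a i) 0 - a i) ∈ A :=
    hA.increasing a ha _ fun i => sub_nonneg.2 (le_max_left _ _)
  have hnorm : ‖a + fun i => max (a i) 0 - a i‖ < r := by
    refine (pi_norm_lt_iff hr).2 fun i => ?_
    simpa [abs_of_nonneg (le_max_right (a i) 0)] using max_lt (hlt i) hr
  exact (hball _ hmax).not_gt (by rwa [dist_zero_left])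

lemma smul_mem_of_one_le (hA : IsRSet d A) {a : Fin d → ℝ} (ha : a ∈ A) {l : ℝ} (hl : 1 ≤ l) :
    l • a ∈ A := by
  by_contra h
  have hl0 : 0 < l := one_pos.trans_le hl
  have := hA.convex_compl.smul_mem_of_zero_mem
    (fun h0 => hA.zero_notMem_closure (subset_closure h0)) h
    ⟨inv_nonneg.2 hl0.le, inv_le_one_of_one_le₀ hl⟩
  rw [inv_smul_smul₀ hl0.ne'] at this
  exact this ha

lemma bddAbove_setOf_mem_smul (hA : IsRSet d A) (z : Fin d → ℝ) :
    BddAbove {u : ℝ | 0 < u ∧ z ∈ u • A} := by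
  obtain ⟨r, hr, hrA⟩ := hA.exists_pos_le_apply
  refine ⟨‖z‖ / r, fun u ⟨hu, hz⟩ => ?_⟩
  rw [mem_smul_set_iff_inv_smul_mem₀ hu.ne'] at hz
  obtain ⟨i, hi⟩ := hrA _ hz
  have hzi : u⁻¹ * z i ≤ u⁻¹ * ‖z‖ :=
    mul_le_mul_of_nonneg_left ((le_abs_self _).trans (norm_le_pi_norm z i)) (inv_nonneg.2 hu.le)
  rw [le_div_iff₀ hr]
  calc u * r ≤ u * (u⁻¹ * ‖z‖) := mul_le_mul_of_nonneg_left (hi.trans hzi) hu.le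
    _ = ‖z‖ := by field_simp

lemma mem_smul_iff_lt_suprA (hA : IsRSet d A) {z : Fin d → ℝ} {x : ℝ} (hx : 0 < x) :
    z ∈ x • A ↔ x < suprA A z := by
  constructor
  · intro hz
    rw [mem_smul_set_iff_inv_smul_mem₀ hx.ne'] at hz
    have hnhds : ∀ᶠ t in 𝓝[>] x, t⁻¹ • z ∈ A :=
      (((continuousAt_inv₀ hx.ne').smul continuousAt_const).eventually_mem
        (hA.isOpen.mem_nhds hz)).filter_mono nhdsWithin_le_nhds
    obtain ⟨t, htA, hxt⟩ := (hnhds.and self_mem_nhdsWithin).exists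
    have ht : 0 < t := hx.trans hxt
    exact hxt.trans_le <| le_csSup (hA.bddAbove_setOf_mem_smul z)
      ⟨ht, (mem_smul_set_iff_inv_smul_mem₀ ht.ne' A z).2 htA⟩
  · intro hxz
    have hne : {u : ℝ | 0 < u ∧ z ∈ u • A}.Nonempty := by
      by_contra hemp
      rw [not_nonempty_iff_eq_empty] at hemp
      rw [suprA, hemp, Real.sSup_empty] at hxz
      exact hx.not_gt hxz
    obtain ⟨u, ⟨hu, hz⟩, hxu⟩ := exists_lt_of_lt_csSup hne hxz
    rw [mem_smul_set_iff_inv_smul_mem₀ hu.ne'] at hz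
    have := hA.smul_mem_of_one_le hz ((one_le_div hx).2 hxu.le)
    rwa [smul_smul, show u / x * u⁻¹ = x⁻¹ by field_simp,
      ← mem_smul_set_iff_inv_smul_mem₀ hx.ne'] at this

lemma measurable_suprA (hA : IsRSet d A) : Measurable (suprA A) := by
  refine measurable_of_Ioi fun x => ?_
  rcases lt_or_ge x 0 with hx | hx
  · convert MeasurableSet.univ
    exact eq_univ_of_forall fun z => hx.trans_le (suprA_nonneg A z)
  · have hpos (n : ℕ) : 0 < x + 1 / (n + 1) := by positivity
    have : suprA A ⁻¹' Ioi x = ⋃ n : ℕ, (x + 1 / (n + 1)) • A := by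
      ext z
      simp only [mem_preimage, mem_Ioi, mem_iUnion, hA.mem_smul_iff_lt_suprA (hpos _)]
      refine ⟨fun h => ?_, fun ⟨n, hn⟩ => ?_⟩
      · obtain ⟨n, hn⟩ := exists_nat_one_div_lt (sub_pos.2 h)
        exact ⟨n, by linarith⟩
      · linarith [Nat.one_div_pos_of_nat (α := ℝ) (n := n)]
    rw [this]
    exact .iUnion fun n => (hA.isOpen.smul₀ (hpos n).ne').measurableSet

lemma suprA_add_le (hA : IsRSet d A) (v w : Fin d → ℝ) :
    suprA A (v + w) ≤ suprA A v + suprA A w := by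
  refine Real.sSup_le (fun u ⟨hu, hvw⟩ => ?_) (add_nonneg (suprA_nonneg A v) (suprA_nonneg A w))
  by_contra! hlt
  obtain ⟨p, q, hp, hq, hpv, hqw, hpq⟩ : ∃ p q : ℝ, 0 < p ∧ 0 < q ∧ suprA A v < p ∧
      suprA A w < q ∧ p + q = u :=
    ⟨suprA A v + (u - (suprA A v + suprA A w)) / 2, suprA A w + (u - (suprA A v + suprA A w)) / 2,
      by linarith [suprA_nonneg A v], by linarith [suprA_nonneg A w], by linarith, by linarith,
      by ring⟩
  have hv : p⁻¹ • v ∈ Aᶜ := by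
    rw [mem_compl_iff, ← mem_smul_set_iff_inv_smul_mem₀ hp.ne', hA.mem_smul_iff_lt_suprA hp,
      not_lt]
    exact hpv.le
  have hw : q⁻¹ • w ∈ Aᶜ := by
    rw [mem_compl_iff, ← mem_smul_set_iff_inv_smul_mem₀ hq.ne', hA.mem_smul_iff_lt_suprA hq,
      not_lt]
    exact hqw.le
  -- `u⁻¹ • (v + w)` is a convex combination of `p⁻¹ • v` and `q⁻¹ • w`, since `p + q = u`
  have hcomb := hA.convex_compl hv hw (a := p / u) (b := q / u) (by positivity) (by positivity)
    (by rw [← add_div, hpq, div_self hu.ne'])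
  have hcancel {t : ℝ} (ht : t ≠ 0) : t / u * t⁻¹ = u⁻¹ := by field_simp
  rw [smul_smul, smul_smul, hcancel hp.ne', hcancel hq.ne', ← smul_add] at hcomb
  exact hcomb ((mem_smul_set_iff_inv_smul_mem₀ hu.ne' A _).1 hvw)

lemma suprA_sub_le (hA : IsRSet d A) (v w : Fin d → ℝ) :
    suprA A v - suprA A (-w) ≤ suprA A (v + w) := by
  have := hA.suprA_add_le (v + w) (-w)
  rw [add_neg_cancel_right] at this
  linarith

end IsRSet

lemma add_div_add_le_max {a b c d : ℝ} (hc : 0 < c) (hd : 0 < d) :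
    (a + b) / (c + d) ≤ max (a / c) (b / d) := by
  rw [div_le_iff₀ (add_pos hc hd)]
  have ha : a ≤ c * max (a / c) (b / d) := by
    rw [← div_le_iff₀' hc]; exact le_max_left _ _
  have hb : b ≤ d * max (a / c) (b / d) := by
    rw [← div_le_iff₀' hd]; exact le_max_right _ _
  linarith

lemma min_le_add_div_add {a b c d : ℝ} (hc : 0 < c) (hd : 0 < d) :
    min (a / c) (b / d) ≤ (a + b) / (c + d) := by
  rw [le_div_iff₀ (add_pos hc hd)]
  have ha : c * min (a / c) (b / d) ≤ a := by
    rw [← le_div_iff₀' hc]; exact min_le_left _ _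
  have hb : d * min (a / c) (b / d) ≤ b := by
    rw [← le_div_iff₀' hd]; exact min_le_right _ _
  linarith

lemma tendsto_add_div_add {α : Type*} {l : Filter α} {f₁ f₂ g₁ g₂ : α → ℝ}
    (h₁ : Tendsto (fun x => f₁ x / g₁ x) l (𝓝 1)) (h₂ : Tendsto (fun x => f₂ x / g₂ x) l (𝓝 1))
    (hg₁ : ∀ᶠ x in l, 0 < g₁ x) (hg₂ : ∀ᶠ x in l, 0 < g₂ x) :
    Tendsto (fun x => (f₁ x + f₂ x) / (g₁ x + g₂ x)) l (𝓝 1) := by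
  refine tendsto_of_tendsto_of_tendsto_of_le_of_le' (by simpa using h₁.min h₂)
    (by simpa using h₁.max h₂) ?_ ?_
  · filter_upwards [hg₁, hg₂] with x hx₁ hx₂ using min_le_add_div_add hx₁ hx₂
  · filter_upwards [hg₁, hg₂] with x hx₁ hx₂ using add_div_add_le_max hx₁ hx₂

lemma exists_ratio_eq_mul_of_tendsto_div {f g s : ℝ → ℝ}
    (hfg : Tendsto (fun x => f x / g x) atTop (𝓝 1)) (hg : ∀ x, 0 < g x)
    (hs : Tendsto s atTop atTop) :
    ∃ R : ℝ → ℝ, Tendsto R atTop (𝓝 1) ∧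
      ∀ᶠ x in atTop, f (s x) / f x = R x * (g (s x) / g x) := by
  refine ⟨fun x => (f (s x) / g (s x)) / (f x / g x), ?_, ?_⟩
  · rw [← div_one (1 : ℝ)]
    exact (hfg.comp hs).div hfg one_ne_zero
  · filter_upwards [hfg.eventually_ne one_ne_zero] with x hx
    have hf : f x ≠ 0 := left_ne_zero_of_mul (by simpa [div_eq_mul_inv] using hx)
    have := (hg x).ne'
    have := (hg (s x)).ne'
    field_simp

lemma eventually_mul_le_of_tendsto_one {α : Type*} {l : Filter α} {R p : α → ℝ} {c c' : ℝ}
    (hR : Tendsto R l (𝓝 1)) (hp : ∀ᶠ x in l, 0 ≤ p x) (hpc : ∀ᶠ x in l, p x ≤ c)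
    (hcc' : c < c') (hc' : 0 < c') : ∀ᶠ x in l, R x * p x ≤ c' := by
  set m := max c (c' / 2)
  have hm : 0 < m := lt_max_of_lt_right (half_pos hc')
  have hmc' : m < c' := max_lt hcc' (half_lt_self hc')
  filter_upwards [hR.eventually_le_const ((one_lt_div hm).2 hmc'), hp, hpc] with x hR hp hpc
  calc R x * p x ≤ c' / m * m :=
        mul_le_mul hR (hpc.trans (le_max_left _ _)) hp (div_pos hc' hm).le
    _ = c' := div_mul_cancel₀ _ hm.ne'

lemma eventually_ratio_le_of_tendsto_div {f g s : ℝ → ℝ} {c c' : ℝ}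
    (hfg : Tendsto (fun x => f x / g x) atTop (𝓝 1)) (hg : ∀ x, 0 < g x)
    (hs : Tendsto s atTop atTop) (hgs : ∀ᶠ x in atTop, g (s x) / g x ≤ c) (hcc' : c < c')
    (hc' : 0 < c') : ∀ᶠ x in atTop, f (s x) / f x ≤ c' := by
  obtain ⟨R, hR, hfR⟩ := exists_ratio_eq_mul_of_tendsto_div hfg hg hs
  filter_upwards [hfR, eventually_mul_le_of_tendsto_one hR
    (.of_forall fun x => (div_pos (hg (s x)) (hg x)).le) hgs hcc' hc'] with x hx hle
  rwa [hx]

section Tail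

variable {ν ν₁ ν₂ : Measure ℝ}

lemma mTail_nonneg (ν : Measure ℝ) (x : ℝ) : 0 ≤ mTail ν x := ENNReal.toReal_nonneg

lemma mTail_anti [IsFiniteMeasure ν] : Antitone (mTail ν) := fun _ _ h =>
  measureReal_mono (Ioi_subset_Ioi h)

lemma tendsto_mTail_atTop (ν : Measure ℝ) [IsFiniteMeasure ν] : Tendsto (mTail ν) atTop (𝓝 0) := by
  have h := tendsto_measure_iInter_atTop (μ := ν) (fun x => measurableSet_Ioi.nullMeasurableSet)
    (fun _ _ h => Ioi_subset_Ioi h) ⟨0, measure_ne_top ν _⟩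
  rw [show (⋂ x : ℝ, Ioi x) = ∅ from iInter_eq_empty_iff.2 fun y => ⟨y, lt_irrefl y⟩,
    measure_empty] at h
  exact (ENNReal.tendsto_toReal ENNReal.zero_ne_top).comp h

lemma mTail_pos_of_tendsto_div [IsFiniteMeasure ν] {g : ℝ → ℝ}
    (h : Tendsto (fun x => mTail ν x / g x) atTop (𝓝 1)) (hg : ∀ x, 0 < g x) (x : ℝ) :
    0 < mTail ν x := by
  obtain ⟨y, hy, hxy⟩ := ((h.eventually (lt_mem_nhds one_pos)).and (eventually_ge_atTop x)).exists
  exact ((div_pos_iff_of_pos_right (hg y)).1 hy).trans_le (mTail_anti hxy)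

lemma MemL.tendsto_mTail_add_div (hL : MemL ν) {a : ℝ} (ha : 0 < a) :
    Tendsto (fun x => mTail ν (x + a) / mTail ν x) atTop (𝓝 1) := by
  have := ((hL a ha).comp (tendsto_atTop_add_const_right _ a tendsto_id)).inv₀ one_ne_zero
  simpa using this

lemma eventually_ratio_le_of_tendsto_div_add {s : ℝ → ℝ} {c₁ c₂ c : ℝ}
    (h : Tendsto (fun x => mTail ν x / (mTail ν₁ x + mTail ν₂ x)) atTop (𝓝 1))
    (h₁pos : ∀ x, 0 < mTail ν₁ x) (h₂pos : ∀ x, 0 < mTail ν₂ x) (hs : Tendsto s atTop atTop)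
    (h₁ : ∀ᶠ x in atTop, mTail ν₁ (s x) / mTail ν₁ x ≤ c₁)
    (h₂ : ∀ᶠ x in atTop, mTail ν₂ (s x) / mTail ν₂ x ≤ c₂) (hc : max c₁ c₂ < c) (hc0 : 0 < c) :
    ∀ᶠ x in atTop, mTail ν (s x) / mTail ν x ≤ c := by
  refine eventually_ratio_le_of_tendsto_div h (fun x => add_pos (h₁pos x) (h₂pos x)) hs ?_ hc hc0
  filter_upwards [h₁, h₂] with x hx₁ hx₂
  exact (add_div_add_le_max (h₁pos x) (h₂pos x)).trans (max_le_max hx₁ hx₂)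

lemma memD_of_tendsto_div_add
    (h : Tendsto (fun x => mTail ν x / (mTail ν₁ x + mTail ν₂ x)) atTop (𝓝 1))
    (h₁pos : ∀ x, 0 < mTail ν₁ x) (h₂pos : ∀ x, 0 < mTail ν₂ x) (h₁ : MemD ν₁) (h₂ : MemD ν₂) :
    MemD ν := by
  intro y hy0 hy1
  obtain ⟨C₁, hC₁⟩ := h₁ y hy0 hy1
  obtain ⟨C₂, hC₂⟩ := h₂ y hy0 hy1
  exact ⟨_, eventually_ratio_le_of_tendsto_div_add h h₁pos h₂pos
    (tendsto_id.const_mul_atTop hy0) hC₁ hC₂ ((le_max_left _ 0).trans_lt (lt_add_one _))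
    (by positivity)⟩

lemma memPD_of_tendsto_div_add
    (h : Tendsto (fun x => mTail ν x / (mTail ν₁ x + mTail ν₂ x)) atTop (𝓝 1))
    (h₁pos : ∀ x, 0 < mTail ν₁ x) (h₂pos : ∀ x, 0 < mTail ν₂ x) (h₁ : MemPD ν₁)
    (h₂ : MemPD ν₂) : MemPD ν := by
  intro b hb
  obtain ⟨c₁, hc₁, hb₁⟩ := h₁ b hb
  obtain ⟨c₂, hc₂, hb₂⟩ := h₂ b hb
  have hc : max (max c₁ c₂) 0 < 1 := max_lt (max_lt hc₁ hc₂) one_pos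
  refine ⟨(max (max c₁ c₂) 0 + 1) / 2, by linarith, eventually_ratio_le_of_tendsto_div_add h
    h₁pos h₂pos (tendsto_id.const_mul_atTop (one_pos.trans hb)) hb₁ hb₂ ?_ (by positivity)⟩
  linarith [le_max_left (max c₁ c₂) 0]

lemma memL_of_tendsto_div_add
    (h : Tendsto (fun x => mTail ν x / (mTail ν₁ x + mTail ν₂ x)) atTop (𝓝 1))
    (h₁pos : ∀ x, 0 < mTail ν₁ x) (h₂pos : ∀ x, 0 < mTail ν₂ x) (h₁ : MemL ν₁) (h₂ : MemL ν₂) :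
    MemL ν := by
  intro a ha
  obtain ⟨R, hR, hνR⟩ := exists_ratio_eq_mul_of_tendsto_div h (fun x => add_pos (h₁pos x) (h₂pos x))
    (tendsto_atTop_atTop.2 fun b => ⟨b + a, fun x hx => by linarith⟩ : Tendsto (· - a) _ _)
  rw [← mul_one (1 : ℝ)]
  refine (hR.mul (tendsto_add_div_add (h₁ a ha) (h₂ a ha) (.of_forall h₁pos)
    (.of_forall h₂pos))).congr' ?_
  filter_upwards [hνR] with x hx using hx.symm

end Tail

section Convolution

lemma mTail_mConv (μ₁ μ₂ : Measure ℝ) (x : ℝ) :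
    mTail (mConv μ₁ μ₂) x = (μ₁.prod μ₂).real {p | x < p.1 + p.2} :=
  map_measureReal_apply (measurable_fst.add measurable_snd) measurableSet_Ioi

variable (μ₁ μ₂ : Measure ℝ) [IsProbabilityMeasure μ₁] [IsProbabilityMeasure μ₂]

instance : IsProbabilityMeasure (mConv μ₁ μ₂) :=
  Measure.isProbabilityMeasure_map (measurable_fst.add measurable_snd).aemeasurable

/-- A sum exceeding `x` has a summand exceeding `x - M`, or both summands exceed `M` and one of
them exceeds `x / 2`. -/
lemma mTail_mConv_le (x M : ℝ) :
    mTail (mConv μ₁ μ₂) x ≤ mTail μ₁ (x - M) + mTail μ₂ (x - M)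
      + mTail μ₁ (2⁻¹ * x) * mTail μ₂ M + mTail μ₁ M * mTail μ₂ (2⁻¹ * x) := by
  have hsub : {p : ℝ × ℝ | x < p.1 + p.2} ⊆ Ioi (x - M) ×ˢ univ ∪ univ ×ˢ Ioi (x - M)
      ∪ Ioi (2⁻¹ * x) ×ˢ Ioi M ∪ Ioi M ×ˢ Ioi (2⁻¹ * x) := by
    rintro ⟨p, q⟩ (h : x < p + q)
    simp only [mem_union, mem_prod, mem_Ioi, mem_univ, and_true, true_and]
    by_contra! hpq
    rcases le_or_gt p (2⁻¹ * x) with hp | hp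
    · linarith [hpq.1.1.1, hpq.2 (by linarith [hpq.1.1.1])]
    · linarith [hpq.1.1.2, hpq.1.2 hp]
  rw [mTail_mConv]
  grw [measureReal_mono hsub, measureReal_union_le, measureReal_union_le, measureReal_union_le]
  simp only [measureReal_prod_prod, probReal_univ, mul_one, one_mul]
  rfl

variable {μ₁ μ₂}

lemma measureReal_Ici_zero {μ : Measure ℝ} [IsProbabilityMeasure μ] (h : μ (Iio 0) = 0) :
    μ.real (Ici 0) = 1 := by
  rw [← compl_Iio, probReal_compl_eq_one_sub measurableSet_Iio, measureReal_def, h,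
    ENNReal.toReal_zero, sub_zero]

lemma le_mTail_mConv (h₁ : μ₁ (Iio 0) = 0) (h₂ : μ₂ (Iio 0) = 0) (x : ℝ) :
    mTail μ₁ x + mTail μ₂ x - mTail μ₁ x * mTail μ₂ x ≤ mTail (mConv μ₁ μ₂) x := by
  have hunion := measureReal_union_add_inter (μ := μ₁.prod μ₂) (s := Ioi x ×ˢ Ici 0)
    (t := Ici 0 ×ˢ Ioi x) (measurableSet_Ici.prod measurableSet_Ioi)
  rw [prod_inter_prod, measureReal_prod_prod, measureReal_prod_prod, measureReal_prod_prod,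
    measureReal_Ici_zero h₁, measureReal_Ici_zero h₂, mul_one, one_mul] at hunion
  have hinter : μ₁.real (Ioi x ∩ Ici 0) * μ₂.real (Ici 0 ∩ Ioi x) ≤ mTail μ₁ x * mTail μ₂ x :=
    mul_le_mul (measureReal_mono inter_subset_left) (measureReal_mono inter_subset_right)
      measureReal_nonneg (mTail_nonneg _ _)
  have hsub : Ioi x ×ˢ Ici 0 ∪ Ici 0 ×ˢ Ioi x ⊆ {p : ℝ × ℝ | x < p.1 + p.2} := by
    rintro ⟨p, q⟩ (⟨hp, hq⟩ | ⟨hp, hq⟩) <;> simp only [mem_Ioi, mem_Ici] at hp hq <;>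
      exact (show x < p + q by linarith)
  have hconv := measureReal_mono (μ := μ₁.prod μ₂) hsub
  rw [← mTail_mConv] at hconv
  change _ + _ = mTail μ₁ x + mTail μ₂ x at hunion
  linarith

lemma MemD.exists_le_mul {ν : Measure ℝ} (hD : MemD ν) (hpos : ∀ x, 0 < mTail ν x) {y : ℝ}
    (hy0 : 0 < y) (hy1 : y < 1) : ∃ C, 0 ≤ C ∧ ∀ᶠ x in atTop, mTail ν (y * x) ≤ C * mTail ν x := by
  obtain ⟨C, hC⟩ := hD y hy0 hy1
  refine ⟨max C 0, le_max_right _ _, ?_⟩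
  filter_upwards [hC] with x hx
  rw [← div_le_iff₀ (hpos x)]
  exact hx.trans (le_max_left _ _)

lemma tendsto_mTail_mConv_div_add (h₁0 : μ₁ (Iio 0) = 0) (h₂0 : μ₂ (Iio 0) = 0)
    (h₁D : MemD μ₁) (h₂D : MemD μ₂) (h₁L : MemL μ₁) (h₂L : MemL μ₂)
    (h₁pos : ∀ x, 0 < mTail μ₁ x) (h₂pos : ∀ x, 0 < mTail μ₂ x) :
    Tendsto (fun x => mTail (mConv μ₁ μ₂) x / (mTail μ₁ x + mTail μ₂ x)) atTop (𝓝 1) := by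
  have hT x : 0 < mTail μ₁ x + mTail μ₂ x := add_pos (h₁pos x) (h₂pos x)
  have hlow x : 1 - mTail μ₂ x ≤ mTail (mConv μ₁ μ₂) x / (mTail μ₁ x + mTail μ₂ x) := by
    rw [le_div_iff₀ (hT x)]
    nlinarith [le_mTail_mConv h₁0 h₂0 x, mTail_nonneg μ₁ x, mTail_nonneg μ₂ x]
  obtain ⟨C₁, hC₁0, hC₁⟩ := h₁D.exists_le_mul h₁pos (by norm_num : (0 : ℝ) < 2⁻¹) (by norm_num)
  obtain ⟨C₂, hC₂0, hC₂⟩ := h₂D.exists_le_mul h₂pos (by norm_num : (0 : ℝ) < 2⁻¹) (by norm_num)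
  have hup (M : ℝ) : ∀ᶠ x in atTop, mTail (mConv μ₁ μ₂) x / (mTail μ₁ x + mTail μ₂ x) ≤
      (mTail μ₁ (x - M) + mTail μ₂ (x - M)) / (mTail μ₁ x + mTail μ₂ x)
        + (C₁ * mTail μ₂ M + C₂ * mTail μ₁ M) := by
    filter_upwards [hC₁, hC₂] with x hx₁ hx₂
    rw [div_add' _ _ _ (hT x).ne', div_le_div_iff_of_pos_right (hT x)]
    have h₁M := mTail_nonneg μ₁ M
    have h₂M := mTail_nonneg μ₂ M
    nlinarith [mTail_mConv_le μ₁ μ₂ x M, mul_le_mul_of_nonneg_right hx₁ h₂M,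
      mul_le_mul_of_nonneg_left hx₂ h₁M, mul_nonneg (mul_nonneg hC₁0 h₂M) (mTail_nonneg μ₂ x),
      mul_nonneg (mul_nonneg hC₂0 h₁M) (mTail_nonneg μ₁ x)]
  rw [tendsto_order]
  refine ⟨fun c hc => ?_, fun c hc => ?_⟩
  · have : Tendsto (fun x => 1 - mTail μ₂ x) atTop (𝓝 1) := by
      simpa using (tendsto_mTail_atTop μ₂).const_sub (1 : ℝ)
    filter_upwards [this.eventually (lt_mem_nhds hc)] with x hx using hx.trans_le (hlow x)
  · have hsmall : Tendsto (fun M => C₁ * mTail μ₂ M + C₂ * mTail μ₁ M) atTop (𝓝 0) := by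
      simpa using ((tendsto_mTail_atTop μ₂).const_mul C₁).add
        ((tendsto_mTail_atTop μ₁).const_mul C₂)
    obtain ⟨M, hM, hM0⟩ := ((hsmall.eventually (gt_mem_nhds (half_pos (sub_pos.2 hc)))).and
      (eventually_gt_atTop 0)).exists
    have hshift := tendsto_add_div_add (h₁L M hM0) (h₂L M hM0) (.of_forall h₁pos)
      (.of_forall h₂pos)
    filter_upwards [hup M, hshift.eventually (gt_mem_nhds (by linarith : 1 < 1 + (c - 1) / 2))]
      with x hx hx'
    linarith

lemma le_mTail_mConv_self {μ : Measure ℝ} [IsProbabilityMeasure μ] (h0 : μ (Iio 0) = 0)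
    {a x : ℝ} (ha : 0 ≤ a) (hax : a < x) :
    mTail μ x + (mTail μ a - mTail μ x) * mTail μ (x - a) + (1 - mTail μ a) * mTail μ x
      ≤ mTail (mConv μ μ) x := by
  have hIoc : μ.real (Ioc a x) = mTail μ a - mTail μ x := by
    rw [← Ioi_sdiff_Ioi, measureReal_sdiff (Ioi_subset_Ioi hax.le) measurableSet_Ioi]; rfl
  have hIcc : μ.real (Icc 0 a) = 1 - mTail μ a := by
    rw [← Ici_sdiff_Ioi, measureReal_sdiff (Ioi_subset_Ici ha) measurableSet_Ioi,
      measureReal_Ici_zero h0]; rfl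
  have hsub : Ioi x ×ˢ Ici 0 ∪ Ioc a x ×ˢ Ioi (x - a) ∪ Icc 0 a ×ˢ Ioi x
      ⊆ {p : ℝ × ℝ | x < p.1 + p.2} := by
    rintro ⟨p, q⟩ ((⟨hp, hq⟩ | ⟨hp, hq⟩) | ⟨hp, hq⟩) <;>
      simp only [mem_Ioi, mem_Ici, mem_Ioc, mem_Icc] at hp hq <;>
      exact (show x < p + q by linarith)
  have hdisj₁₂ : Disjoint (Ioi x ×ˢ Ici 0) (Ioc a x ×ˢ Ioi (x - a)) :=
    disjoint_prod.2 (.inl (disjoint_left.2 fun p hp hp' => hp'.2.not_gt hp))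
  have hdisj₃ : Disjoint (Ioi x ×ˢ Ici 0 ∪ Ioc a x ×ˢ Ioi (x - a)) (Icc 0 a ×ˢ Ioi x) := by
    refine disjoint_union_left.2 ⟨disjoint_prod.2 (.inl ?_), disjoint_prod.2 (.inl ?_)⟩
    · exact disjoint_left.2 fun p hp hp' => (hp'.2.trans_lt hax).not_gt hp
    · exact disjoint_left.2 fun p hp hp' => hp'.2.not_gt hp.1
  have hmono := measureReal_mono (μ := μ.prod μ) hsub
  rw [measureReal_union hdisj₃ (measurableSet_Icc.prod measurableSet_Ioi),
    measureReal_union hdisj₁₂ (measurableSet_Ioc.prod measurableSet_Ioi), measureReal_prod_prod,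
    measureReal_prod_prod, measureReal_prod_prod, measureReal_Ici_zero h0, hIoc, hIcc,
    ← mTail_mConv] at hmono
  change mTail μ x * 1 + _ * mTail μ (x - a) + _ * mTail μ x ≤ _ at hmono
  linarith

lemma memL_of_memS {μ : Measure ℝ} [IsProbabilityMeasure μ] (h0 : μ (Iio 0) = 0)
    (hpos : ∀ x, 0 < mTail μ x) (hS : MemS μ) : MemL μ := by
  intro a ha
  -- dividing `le_mTail_mConv_self` by `mTail μ x` bounds `mTail μ (x - a) / mTail μ x` by this
  have hB : Tendsto (fun x => (mTail (mConv μ μ) x / mTail μ x - 2 + mTail μ a) /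
      (mTail μ a - mTail μ x)) atTop (𝓝 1) := by
    have := ((hS.sub_const 2).add_const (mTail μ a)).div
      ((tendsto_mTail_atTop μ).const_sub (mTail μ a)) (by simpa using (hpos a).ne')
    rwa [sub_self, zero_add, sub_zero, div_self (hpos a).ne'] at this
  refine tendsto_of_tendsto_of_tendsto_of_le_of_le' tendsto_const_nhds hB ?_ ?_
  · refine .of_forall fun x => ?_
    rw [le_div_iff₀ (hpos x), one_mul]
    exact mTail_anti (sub_le_self x ha.le)
  · filter_upwards [eventually_gt_atTop a,
      (tendsto_mTail_atTop μ).eventually (gt_mem_nhds (hpos a))] with x hax hxa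
    have hconv := le_mTail_mConv_self h0 ha.le hax
    have hcancel : mTail (mConv μ μ) x / mTail μ x * mTail μ x = mTail (mConv μ μ) x :=
      div_mul_cancel₀ _ (hpos x).ne'
    rw [div_le_div_iff₀ (hpos x) (sub_pos.2 hxa)]
    nlinarith

lemma memS_of_memD_of_memL {μ : Measure ℝ} [IsProbabilityMeasure μ] (h0 : μ (Iio 0) = 0)
    (hD : MemD μ) (hL : MemL μ) (hpos : ∀ x, 0 < mTail μ x) : MemS μ := by
  have h := (tendsto_mTail_mConv_div_add h0 h0 hD hD hL hL hpos hpos).const_mul 2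
  rw [mul_one] at h
  refine h.congr fun x => ?_
  have := (hpos x).ne'
  field_simp
  ring

end Convolution

section Distribution

variable {P : Measure Ω} {A : Set (Fin d → ℝ)} {X X₁ X₂ : Ω → Fin d → ℝ}

lemma mTail_FA (hA : IsRSet d A) (hX : Measurable X) (x : ℝ) :
    mTail (FA P A X) x = P.real {ω | x < suprA A (X ω)} :=
  map_measureReal_apply (hA.measurable_suprA.comp hX) measurableSet_Ioi

lemma mTail_FA_eq_vTail (hA : IsRSet d A) (hX : Measurable X) {x : ℝ} (hx : 0 < x) :
    mTail (FA P A X) x = vTail P A X x := by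
  simp_rw [mTail_FA hA hX, vTail, hA.mem_smul_iff_lt_suprA hx]
  rfl

lemma FA_Iio_zero (hA : IsRSet d A) (hX : Measurable X) : FA P A X (Iio 0) = 0 := by
  rw [FA, Measure.map_apply (f := fun ω => suprA A (X ω)) (hA.measurable_suprA.comp hX)
    measurableSet_Iio]
  convert measure_empty (μ := P)
  exact eq_empty_of_forall_notMem fun ω h => (suprA_nonneg A (X ω)).not_gt h

lemma _root_.ProbabilityTheory.IndepFun.measureReal_inter_preimage_eq_mul {β γ : Type*}
    [MeasurableSpace β] [MeasurableSpace γ] {f : Ω → β} {g : Ω → γ} (hind : IndepFun f g P)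
    {s : Set β} {t : Set γ} (hs : MeasurableSet s) (ht : MeasurableSet t) :
    P.real (f ⁻¹' s ∩ g ⁻¹' t) = P.real (f ⁻¹' s) * P.real (g ⁻¹' t) := by
  simp only [measureReal_def, hind.measure_inter_preimage_eq_mul s t hs ht, ENNReal.toReal_mul]

variable [IsProbabilityMeasure P]

lemma isProbabilityMeasure_FA (hA : IsRSet d A) (hX : Measurable X) :
    IsProbabilityMeasure (FA P A X) :=
  Measure.isProbabilityMeasure_map (hA.measurable_suprA.comp hX).aemeasurable

lemma mTail_FA_pos (hA : IsRSet d A) (hX : Measurable X)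
    (hpos : ∀ x : ℝ, 0 < x → 0 < P {ω | X ω ∈ x • A}) (x : ℝ) : 0 < mTail (FA P A X) x := by
  have := isProbabilityMeasure_FA (P := P) hA hX
  have hx : 0 < max x 1 := lt_max_of_lt_right one_pos
  calc 0 < vTail P A X (max x 1) := ENNReal.toReal_pos (hpos _ hx).ne' (measure_ne_top _ _)
    _ = mTail (FA P A X) (max x 1) := (mTail_FA_eq_vTail hA hX hx).symm
    _ ≤ mTail (FA P A X) x := mTail_anti (le_max_left x 1)

lemma mTail_FA_add_le_mConv (hA : IsRSet d A) (hX₁ : Measurable X₁) (hX₂ : Measurable X₂)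
    (hind : IndepFun X₁ X₂ P) (x : ℝ) :
    mTail (FA P A fun ω => X₁ ω + X₂ ω) x ≤ mTail (mConv (FA P A X₁) (FA P A X₂)) x := by
  have hm := hA.measurable_suprA
  have hconv : mConv (FA P A X₁) (FA P A X₂) =
      P.map (fun ω => suprA A (X₁ ω) + suprA A (X₂ ω)) :=
    ((hind.comp hm hm).map_add_eq_map_conv_map (hm.comp hX₁) (hm.comp hX₂)).symm
  rw [hconv, mTail_FA (X := fun ω => X₁ ω + X₂ ω) hA (hX₁.add hX₂), mTail,
    ← measureReal_def, map_measureReal_apply (f := fun ω => suprA A (X₁ ω) + suprA A (X₂ ω))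
      ((hm.comp hX₁).add (hm.comp hX₂)) measurableSet_Ioi]
  exact measureReal_mono fun ω (h : x < _) => h.trans_le (hA.suprA_add_le _ _)

/-- Since `Y_A(X₁ + X₂) ≥ Y_A(X₁) - Y_A(-X₂)`, the sum exceeds `x` as soon as `Y_A(X₁) > x + K` and
`Y_A(-X₂) ≤ K`, or symmetrically. -/
lemma le_mTail_FA_add (hA : IsRSet d A) (hX₁ : Measurable X₁) (hX₂ : Measurable X₂)
    (hind : IndepFun X₁ X₂ P) (x K : ℝ) :
    (1 - mTail (FA P A (-X₂)) K) * mTail (FA P A X₁) (x + K)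
      + (1 - mTail (FA P A (-X₁)) K) * mTail (FA P A X₂) (x + K)
      - mTail (FA P A X₁) (x + K) * mTail (FA P A X₂) (x + K)
      ≤ mTail (FA P A fun ω => X₁ ω + X₂ ω) x := by
  have hm := hA.measurable_suprA
  set s := suprA A ⁻¹' Ioi (x + K)
  set g := (fun w => suprA A (-w)) ⁻¹' Iic K
  have hs : MeasurableSet s := hm measurableSet_Ioi
  have hg : MeasurableSet g := (hm.comp measurable_neg) measurableSet_Iic
  have htail {X : Ω → Fin d → ℝ} (hX : Measurable X) :
      P.real (X ⁻¹' s) = mTail (FA P A X) (x + K) :=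
    (mTail_FA hA hX _).symm
  have hbdd {X : Ω → Fin d → ℝ} (hX : Measurable X) :
      P.real (X ⁻¹' g) = 1 - mTail (FA P A (-X)) K := by
    have hY : Measurable fun ω => suprA A ((-X) ω) := hm.comp hX.neg
    rw [mTail_FA hA hX.neg, ← probReal_compl_eq_one_sub (measurableSet_lt measurable_const hY)]
    congr 1
    ext ω
    simp [g]
  have hunion := measureReal_union_add_inter (μ := P) (s := X₁ ⁻¹' s ∩ X₂ ⁻¹' g)
    (t := X₁ ⁻¹' g ∩ X₂ ⁻¹' s) ((hX₁ hg).inter (hX₂ hs))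
  rw [hind.measureReal_inter_preimage_eq_mul hs hg, hind.measureReal_inter_preimage_eq_mul hg hs,
    htail hX₁, htail hX₂, hbdd hX₁, hbdd hX₂] at hunion
  have hinter : P.real ((X₁ ⁻¹' s ∩ X₂ ⁻¹' g) ∩ (X₁ ⁻¹' g ∩ X₂ ⁻¹' s))
      ≤ mTail (FA P A X₁) (x + K) * mTail (FA P A X₂) (x + K) := by
    rw [← htail hX₁, ← htail hX₂, ← hind.measureReal_inter_preimage_eq_mul hs hs]
    exact measureReal_mono fun ω h => ⟨h.1.1, h.2.2⟩
  have hsum : P.real ((X₁ ⁻¹' s ∩ X₂ ⁻¹' g) ∪ (X₁ ⁻¹' g ∩ X₂ ⁻¹' s))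
      ≤ mTail (FA P A fun ω => X₁ ω + X₂ ω) x := by
    rw [mTail_FA (X := fun ω => X₁ ω + X₂ ω) hA (hX₁.add hX₂)]
    refine measureReal_mono (union_subset ?_ ?_)
    · rintro ω ⟨h₁ : x + K < suprA A (X₁ ω), h₂ : suprA A (-X₂ ω) ≤ K⟩
      show x < suprA A (X₁ ω + X₂ ω)
      linarith [hA.suprA_sub_le (X₁ ω) (X₂ ω)]
    · rintro ω ⟨h₁ : suprA A (-X₁ ω) ≤ K, h₂ : x + K < suprA A (X₂ ω)⟩
      show x < suprA A (X₁ ω + X₂ ω)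
      linarith [add_comm (X₁ ω) (X₂ ω) ▸ hA.suprA_sub_le (X₂ ω) (X₁ ω)]
  linarith

lemma eventually_lt_mTail_FA_add_div (hA : IsRSet d A) (hX₁ : Measurable X₁)
    (hX₂ : Measurable X₂) (hind : IndepFun X₁ X₂ P) (h₁L : MemL (FA P A X₁))
    (h₂L : MemL (FA P A X₂)) (h₁pos : ∀ x, 0 < mTail (FA P A X₁) x)
    (h₂pos : ∀ x, 0 < mTail (FA P A X₂) x) {c : ℝ} (hc : c < 1) :
    ∀ᶠ x in atTop, c < mTail (FA P A fun ω => X₁ ω + X₂ ω) x /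
      (mTail (FA P A X₁) x + mTail (FA P A X₂) x) := by
  have := isProbabilityMeasure_FA (P := P) hA hX₂
  have := isProbabilityMeasure_FA (P := P) hA hX₁.neg
  have := isProbabilityMeasure_FA (P := P) hA hX₂.neg
  obtain ⟨ε, hε, hcε⟩ : ∃ ε : ℝ, 0 < ε ∧ c < 1 - ε := ⟨(1 - c) / 2, by linarith, by linarith⟩
  obtain ⟨K, hK₁, hK₂, hK⟩ :=
    (((tendsto_mTail_atTop (FA P A (-X₁))).eventually (gt_mem_nhds hε)).and
    (((tendsto_mTail_atTop (FA P A (-X₂))).eventually (gt_mem_nhds hε)).and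
    (eventually_gt_atTop 0))).exists
  have hshift := tendsto_add_div_add (h₁L.tendsto_mTail_add_div hK)
    (h₂L.tendsto_mTail_add_div hK) (.of_forall h₁pos) (.of_forall h₂pos)
  have hlow : Tendsto (fun x => (1 - ε - mTail (FA P A X₂) (x + K)) *
      ((mTail (FA P A X₁) (x + K) + mTail (FA P A X₂) (x + K)) /
        (mTail (FA P A X₁) x + mTail (FA P A X₂) x))) atTop (𝓝 (1 - ε)) := by
    simpa using (((tendsto_mTail_atTop _).comp
      (tendsto_atTop_add_const_right _ K tendsto_id)).const_sub (1 - ε)).mul hshift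
  filter_upwards [hlow.eventually (lt_mem_nhds hcε)] with x hx
  refine hx.trans_le ?_
  rw [mul_div_assoc', div_le_div_iff_of_pos_right (add_pos (h₁pos x) (h₂pos x))]
  have h₁ := mTail_nonneg (FA P A X₁) (x + K)
  have h₂ := mTail_nonneg (FA P A X₂) (x + K)
  nlinarith [le_mTail_FA_add hA hX₁ hX₂ hind x K, mul_le_mul_of_nonneg_right hK₁.le h₂,
    mul_le_mul_of_nonneg_right hK₂.le h₁]

lemma tendsto_mTail_FA_add_div (hA : IsRSet d A) (hX₁ : Measurable X₁) (hX₂ : Measurable X₂)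
    (hind : IndepFun X₁ X₂ P) (h₁D : MemD (FA P A X₁)) (h₂D : MemD (FA P A X₂))
    (h₁L : MemL (FA P A X₁)) (h₂L : MemL (FA P A X₂)) (h₁pos : ∀ x, 0 < mTail (FA P A X₁) x)
    (h₂pos : ∀ x, 0 < mTail (FA P A X₂) x) :
    Tendsto (fun x => mTail (FA P A fun ω => X₁ ω + X₂ ω) x /
      (mTail (FA P A X₁) x + mTail (FA P A X₂) x)) atTop (𝓝 1) := by
  have := isProbabilityMeasure_FA (P := P) hA hX₁
  have := isProbabilityMeasure_FA (P := P) hA hX₂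
  refine tendsto_order.2 ⟨fun c hc => eventually_lt_mTail_FA_add_div hA hX₁ hX₂ hind h₁L h₂L
    h₁pos h₂pos hc, fun c hc => ?_⟩
  filter_upwards [(tendsto_mTail_mConv_div_add (FA_Iio_zero hA hX₁) (FA_Iio_zero hA hX₂)
    h₁D h₂D h₁L h₂L h₁pos h₂pos).eventually (gt_mem_nhds hc)] with x hx
  exact (div_le_div_of_nonneg_right (mTail_FA_add_le_mConv hA hX₁ hX₂ hind x)
    (add_pos (h₁pos x) (h₂pos x)).le).trans_lt hx

end Distribution

/-- `(𝓓 ∩ 𝓐)_A` is closed under convolution, and the convolution of two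
`(𝓓 ∩ 𝓐)_A` distributions satisfies `F₁*F₂(xA) ~ F₁(xA) + F₂(xA)`. -/
theorem statement4 (P : Measure Ω) [IsProbabilityMeasure P]
    (A : Set (Fin d → ℝ)) (hA : IsRSet d A)
    (X₁ X₂ : Ω → Fin d → ℝ) (hX₁ : Measurable X₁) (hX₂ : Measurable X₂)
    (hind : IndepFun X₁ X₂ P)
    (h₁D : MemD (FA P A X₁)) (h₁A : MemA (FA P A X₁))
    (h₂D : MemD (FA P A X₂)) (h₂A : MemA (FA P A X₂))
    (hpos₁ : ∀ x : ℝ, 0 < x → 0 < P {ω | X₁ ω ∈ x • A})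
    (hpos₂ : ∀ x : ℝ, 0 < x → 0 < P {ω | X₂ ω ∈ x • A}) :
    Tendsto (fun x => (P {ω | X₁ ω + X₂ ω ∈ x • A}).toReal /
        (vTail P A X₁ x + vTail P A X₂ x)) atTop (𝓝 1) ∧
      MemD (FA P A fun ω => X₁ ω + X₂ ω) ∧ MemA (FA P A fun ω => X₁ ω + X₂ ω) := by
  have hX : Measurable fun ω => X₁ ω + X₂ ω := hX₁.add hX₂
  have := isProbabilityMeasure_FA (P := P) hA hX₁
  have := isProbabilityMeasure_FA (P := P) hA hX₂
  have := isProbabilityMeasure_FA (P := P) hA hX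
  have h₁pos := mTail_FA_pos hA hX₁ hpos₁
  have h₂pos := mTail_FA_pos hA hX₂ hpos₂
  have h₁L := memL_of_memS (FA_Iio_zero hA hX₁) h₁pos h₁A.1
  have h₂L := memL_of_memS (FA_Iio_zero hA hX₂) h₂pos h₂A.1
  have H := tendsto_mTail_FA_add_div hA hX₁ hX₂ hind h₁D h₂D h₁L h₂L h₁pos h₂pos
  have hD := memD_of_tendsto_div_add H h₁pos h₂pos h₁D h₂D
  have hL := memL_of_tendsto_div_add H h₁pos h₂pos h₁L h₂L
  have hpos := mTail_pos_of_tendsto_div H fun x => add_pos (h₁pos x) (h₂pos x)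
  refine ⟨H.congr' ?_, hD, memS_of_memD_of_memL (FA_Iio_zero hA hX) hD hL hpos,
    memPD_of_tendsto_div_add H h₁pos h₂pos h₁A.2 h₂A.2⟩
  filter_upwards [eventually_gt_atTop 0] with x hx
  rw [mTail_FA_eq_vTail hA hX hx, mTail_FA_eq_vTail hA hX₁ hx, mTail_FA_eq_vTail hA hX₂ hx]
  rfl

end Paper
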